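/- arXiv:2304.00107 — 7 statements merged into one kernel-verified Lean document; each statement's English description precedes it below -/
import Mathlib

section
/- Let E > 0, ε ≥ 0, let A, W, V ∈ K(2M), and let x^(1),…,x^(T) ∈ ℝ^{2M} satisfy ‖x^(j)‖ ≤ √(2E) for all j. If ‖W − V‖ ≤ ε/√E, then |Ĉ(W) − Ĉ(V)| ≤ ε, where Ĉ(B) = (1/T) Σ_{j=1}^T (1 − exp(−½‖(A−B)x^(j)‖²)). -/
open MeasureTheory Matrix

noncomputable section

/-- Standard symplectic form Ω = [[0, I], [−I, 0]] on ℝ^{2M}. -/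
def Omg (M : ℕ) : Matrix (Fin (2*M)) (Fin (2*M)) ℝ :=
  Matrix.reindex (finSumFinEquiv.trans (finCongr (two_mul M).symm))
                 (finSumFinEquiv.trans (finCongr (two_mul M).symm))
                 (Matrix.fromBlocks 0 1 (-1) 0)

/-- K(2M) = O(2M) ∩ Sp(2M,ℝ). -/
def KK (M : ℕ) : Set (Matrix (Fin (2*M)) (Fin (2*M)) ℝ) :=
  {A | Aᵀ * A = 1 ∧ Aᵀ * Omg M * A = Omg M}

/-- ℓ² → ℓ² operator norm of a real matrix. -/
def opN {n : ℕ} (A : Matrix (Fin n) (Fin n) ℝ) : ℝ :=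
  ‖Matrix.toEuclideanCLM (𝕜 := ℝ) A‖

/-- Action of a matrix on a Euclidean vector. -/
def mv {n : ℕ} (A : Matrix (Fin n) (Fin n) ℝ) (x : EuclideanSpace ℝ (Fin n)) :
    EuclideanSpace ℝ (Fin n) := Matrix.toEuclideanCLM (𝕜 := ℝ) A x

/-- Projection P_j : ℝ^{2MT} → ℝ^{2M} onto coordinates 2M(j−1)+1, …, 2Mj. -/
def proj (M T : ℕ) (j : Fin T) (x : EuclideanSpace ℝ (Fin (2*M*T))) :
    EuclideanSpace ℝ (Fin (2*M)) :=
  (WithLp.equiv 2 (Fin (2*M) → ℝ)).symm (fun i =>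
    x ⟨2*M*(j : ℕ) + (i : ℕ), by
      have hj : (j : ℕ) + 1 ≤ T := j.isLt
      have hi : (i : ℕ) < 2*M := i.isLt
      calc 2*M*(j : ℕ) + (i : ℕ) < 2*M*((j : ℕ)+1) := by nlinarith
        _ ≤ 2*M*T := Nat.mul_le_mul_left _ hj⟩)

lemma exp_sq_lip (a b : ℝ) :
    |Real.exp (-(1/2)*a^2) - Real.exp (-(1/2)*b^2)| ≤ Real.exp (-(1/2)) * |a - b| := by
  have hd : ∀ t : ℝ, HasDerivWithinAt (fun t : ℝ => Real.exp (-(1/2)*t^2))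
      (Real.exp (-(1/2)*t^2) * (-t)) Set.univ t := by
    intro t
    have h1 : HasDerivAt (fun t : ℝ => -(1/2)*t^2) (-t) t := by
      have := (hasDerivAt_pow 2 t).const_mul (-(1/2) : ℝ)
      refine this.congr_deriv ?_
      ring
    have := h1.exp
    exact this.hasDerivWithinAt
  have hb : ∀ t : ℝ, ‖Real.exp (-(1/2)*t^2) * (-t)‖ ≤ Real.exp (-(1/2)) := by
    intro t
    have h2 : |t| ≤ Real.exp ((t^2-1)/2) := by
      have h3 := Real.add_one_le_exp ((t^2-1)/2)
      nlinarith [sq_nonneg (|t|-1), sq_abs t]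
    have h4 : Real.exp (-(1/2)*t^2) * Real.exp ((t^2-1)/2) = Real.exp (-(1/2)) := by
      rw [← Real.exp_add]; ring_nf
    rw [norm_mul, norm_neg, Real.norm_eq_abs, Real.norm_eq_abs, Real.abs_exp]
    calc Real.exp (-(1/2)*t^2) * |t|
        ≤ Real.exp (-(1/2)*t^2) * Real.exp ((t^2-1)/2) :=
          mul_le_mul_of_nonneg_left h2 (Real.exp_pos _).le
      _ = Real.exp (-(1/2)) := h4
  have := convex_univ.norm_image_sub_le_of_norm_hasDerivWithin_le
    (fun t _ => hd t) (fun t _ => hb t) (Set.mem_univ b) (Set.mem_univ a)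
  simpa [Real.norm_eq_abs] using this

set_option maxHeartbeats 800000 in
/-- Lipschitz continuity of the empirical risk: if `‖W − V‖ ≤ ε/√E` then
`|Ĉ_S(W) − Ĉ_S(V)| ≤ ε`, where `Ĉ_S(B) = (1/T)∑_j (1 − exp(−½‖(A−B)x⁽ʲ⁾‖²))`
and each training vector satisfies `‖x⁽ʲ⁾‖ ≤ √(2E)`. -/
theorem empirical_risk_lipschitz (M T : ℕ) (E ε : ℝ) (hE : 0 < E) (hε : 0 ≤ ε)
    (A W V : Matrix (Fin (2*M)) (Fin (2*M)) ℝ)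
    (hA : A ∈ KK M) (hW : W ∈ KK M) (hV : V ∈ KK M)
    (x : Fin T → EuclideanSpace ℝ (Fin (2*M)))
    (hx : ∀ j, ‖x j‖ ≤ Real.sqrt (2*E))
    (hWV : opN (W - V) ≤ ε / Real.sqrt E) :
    |(1/(T:ℝ)) * ∑ j : Fin T, (1 - Real.exp (-(1/2) * ‖mv (A - W) (x j)‖^2))
      - (1/(T:ℝ)) * ∑ j : Fin T, (1 - Real.exp (-(1/2) * ‖mv (A - V) (x j)‖^2))| ≤ ε := by
  rcases Nat.eq_zero_or_pos T with hT | hT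
  · subst hT; simpa using hε
  have hTpos : (0:ℝ) < (T:ℝ) := by exact_mod_cast hT
  -- per-term bound
  have hterm : ∀ j : Fin T,
      |(1 - Real.exp (-(1/2) * ‖mv (A - W) (x j)‖^2))
        - (1 - Real.exp (-(1/2) * ‖mv (A - V) (x j)‖^2))| ≤ ε := by
    intro j
    set a := ‖mv (A - W) (x j)‖ with ha
    set b := ‖mv (A - V) (x j)‖ with hb
    have hdiff : mv (A - W) (x j) - mv (A - V) (x j) = mv (V - W) (x j) := by
      simp only [mv, map_sub, ContinuousLinearMap.sub_apply]
      abel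
    have h1 : |a - b| ≤ ‖mv (V - W) (x j)‖ := by
      rw [← hdiff]; exact abs_norm_sub_norm_le _ _
    have h2 : ‖mv (V - W) (x j)‖ ≤ opN (W - V) * ‖x j‖ := by
      have : opN (V - W) = opN (W - V) := by
        unfold opN
        rw [show V - W = -(W - V) by abel, map_neg, norm_neg]
      rw [← this]
      exact (Matrix.toEuclideanCLM (𝕜 := ℝ) (V - W)).le_opNorm (x j)
    have hsE : (0:ℝ) < Real.sqrt E := Real.sqrt_pos.mpr hE
    have h3 : opN (W - V) * ‖x j‖ ≤ (ε / Real.sqrt E) * Real.sqrt (2*E) := by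
      apply mul_le_mul hWV (hx j) (norm_nonneg _)
      positivity
    have h4 : (ε / Real.sqrt E) * Real.sqrt (2*E) = Real.sqrt 2 * ε := by
      rw [Real.sqrt_mul (by norm_num : (0:ℝ) ≤ 2)]
      field_simp
    have hab : |a - b| ≤ Real.sqrt 2 * ε := by
      rw [← h4]; exact h1.trans (h2.trans h3)
    have h5 : |(1 - Real.exp (-(1/2) * a^2)) - (1 - Real.exp (-(1/2) * b^2))|
        = |Real.exp (-(1/2) * b^2) - Real.exp (-(1/2) * a^2)| := by
      rw [show (1 - Real.exp (-(1/2) * a^2)) - (1 - Real.exp (-(1/2) * b^2))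
        = Real.exp (-(1/2) * b^2) - Real.exp (-(1/2) * a^2) by ring]
    rw [h5]
    have h6 := exp_sq_lip b a
    have h7 : |b - a| = |a - b| := abs_sub_comm _ _
    have h8 : Real.exp (-(1/2)) * |b - a| ≤ Real.exp (-(1/2)) * (Real.sqrt 2 * ε) := by
      rw [h7]; exact mul_le_mul_of_nonneg_left hab (Real.exp_pos _).le
    have h9 : Real.exp (-(1/2)) * (Real.sqrt 2 * ε) ≤ ε := by
      have hs2 : Real.sqrt 2 ≤ 3/2 := by
        rw [show (3/2:ℝ) = Real.sqrt ((3/2)^2) by rw [Real.sqrt_sq]; norm_num]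
        exact Real.sqrt_le_sqrt (by norm_num)
      have he : (3/2:ℝ) ≤ Real.exp (1/2) := by
        have := Real.add_one_le_exp (1/2:ℝ); linarith
      have hee : Real.exp (-(1/2):ℝ) * Real.exp (1/2:ℝ) = 1 := by
        rw [← Real.exp_add]; norm_num
      have hmul : Real.exp (-(1/2)) * Real.sqrt 2 ≤ 1 := by
        nlinarith [Real.exp_pos (-(1/2):ℝ), Real.sqrt_nonneg 2]
      nlinarith [Real.exp_pos (-(1/2):ℝ), Real.sqrt_nonneg 2]
    exact h6.trans (h8.trans h9)
  rw [← mul_sub, ← Finset.sum_sub_distrib, abs_mul]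
  have hsum : |∑ j : Fin T, ((1 - Real.exp (-(1/2) * ‖mv (A - W) (x j)‖^2))
      - (1 - Real.exp (-(1/2) * ‖mv (A - V) (x j)‖^2)))| ≤ (T:ℝ) * ε := by
    calc _ ≤ ∑ j : Fin T, |(1 - Real.exp (-(1/2) * ‖mv (A - W) (x j)‖^2))
        - (1 - Real.exp (-(1/2) * ‖mv (A - V) (x j)‖^2))| := Finset.abs_sum_le_sum_abs _ _
      _ ≤ ∑ _j : Fin T, ε := Finset.sum_le_sum (fun j _ => hterm j)
      _ = (T:ℝ) * ε := by simp [mul_comm]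
  have : |1/(T:ℝ)| = 1/(T:ℝ) := abs_of_pos (by positivity)
  rw [this]
  calc 1/(T:ℝ) * |_| ≤ 1/(T:ℝ) * ((T:ℝ) * ε) :=
        mul_le_mul_of_nonneg_left hsum (by positivity)
    _ = ε := by field_simp
end
end

section
/- Let E > 0, ε ≥ 0, and let A, W, V ∈ K(2M). If ‖W − V‖ ≤ ε/√E, then |C₁(W) − C₁(V)| ≤ ε. -/
open MeasureTheory Matrix

noncomputable section

lemma aux_deriv_bound (t : ℝ) :
    |t| * Real.exp (-(1/2) * t^2) ≤ Real.exp (-(1/2)) := by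
  rcases eq_or_ne t 0 with h | h
  · simp [h]
    positivity
  · have hu : 0 < |t| := abs_pos.mpr h
    have hlog : Real.log |t| ≤ |t| - 1 := Real.log_le_sub_one_of_pos hu
    have h1 : |t| * Real.exp (-(1/2) * t^2)
        = Real.exp (Real.log |t| + (-(1/2) * t^2)) := by
      rw [Real.exp_add, Real.exp_log hu]
    rw [h1]
    apply Real.exp_le_exp.mpr
    have ht2 : t^2 = |t|^2 := (sq_abs t).symm
    nlinarith [sq_nonneg (|t| - 1)]

lemma aux_lip (a b : ℝ) :
    |Real.exp (-(1/2) * a^2) - Real.exp (-(1/2) * b^2)|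
      ≤ Real.exp (-(1/2)) * |a - b| := by
  have key : ∀ x ∈ (Set.univ : Set ℝ),
      HasDerivWithinAt (fun t => Real.exp (-(1/2) * t^2))
        ((-x) * Real.exp (-(1/2) * x^2)) Set.univ x := by
    intro x _
    have h1 : HasDerivAt (fun t : ℝ => -(1/2) * t^2) (-(1/2) * (2 * x)) x := by
      simpa using ((hasDerivAt_pow 2 x).const_mul (-(1/2) : ℝ))
    have h2 := h1.exp
    have : HasDerivAt (fun t => Real.exp (-(1/2) * t^2))
        ((-x) * Real.exp (-(1/2) * x^2)) x := by
      convert h2 using 1; ring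
    exact this.hasDerivWithinAt
  have bound : ∀ x ∈ (Set.univ : Set ℝ),
      ‖(-x) * Real.exp (-(1/2) * x^2)‖ ≤ Real.exp (-(1/2)) := by
    intro x _
    rw [Real.norm_eq_abs, abs_mul, abs_neg, abs_of_pos (Real.exp_pos _)]
    exact aux_deriv_bound x
  have := Convex.norm_image_sub_le_of_norm_hasDerivWithin_le key bound
    convex_univ (Set.mem_univ b) (Set.mem_univ a)
  simpa [Real.norm_eq_abs] using this

/-- Lipschitz continuity of the ERM1 full risk: if `‖W − V‖ ≤ ε/√E` then
`|C₁(W) − C₁(V)| ≤ ε`, where `C₁(B) = ∫ (1 − exp(−½‖(A−B)x‖²)) dσ_E(x)` and `σ_E`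
is the uniform probability measure on the sphere of radius `√(2E)` in `ℝ^{2M}`. -/
theorem full_risk_erm1_lipschitz (M : ℕ) (E ε : ℝ) (hE : 0 < E) (hε : 0 ≤ ε)
    (A W V : Matrix (Fin (2*M)) (Fin (2*M)) ℝ)
    (hA : A ∈ KK M) (hW : W ∈ KK M) (hV : V ∈ KK M)
    (σE : Measure (EuclideanSpace ℝ (Fin (2*M)))) [IsProbabilityMeasure σE]
    (hsupp : ∀ᵐ x ∂σE, ‖x‖ = Real.sqrt (2*E))
    (hrot : ∀ e : EuclideanSpace ℝ (Fin (2*M)) ≃ₗᵢ[ℝ] EuclideanSpace ℝ (Fin (2*M)),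
      Measure.map e σE = σE)
    (hWV : opN (W - V) ≤ ε / Real.sqrt E) :
    |(∫ x, (1 - Real.exp (-(1/2) * ‖mv (A - W) x‖^2)) ∂σE)
      - (∫ x, (1 - Real.exp (-(1/2) * ‖mv (A - V) x‖^2)) ∂σE)| ≤ ε := by
  have hsE : 0 < Real.sqrt E := Real.sqrt_pos.mpr hE
  -- integrability
  have hint : ∀ B : Matrix (Fin (2*M)) (Fin (2*M)) ℝ,
      Integrable (fun x => (1 : ℝ) - Real.exp (-(1/2) * ‖mv (A - B) x‖^2)) σE := by
    intro B
    have hcont : Continuous fun x : EuclideanSpace ℝ (Fin (2*M)) =>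
        (1 : ℝ) - Real.exp (-(1/2) * ‖mv (A - B) x‖^2) := by
      unfold mv
      fun_prop
    apply (integrable_const (1 : ℝ)).mono' hcont.aestronglyMeasurable
    filter_upwards with x
    have h1 : Real.exp (-(1/2) * ‖mv (A - B) x‖^2) ≤ 1 := by
      apply Real.exp_le_one_iff.mpr
      nlinarith [sq_nonneg ‖mv (A - B) x‖]
    have h2 : 0 < Real.exp (-(1/2) * ‖mv (A - B) x‖^2) := Real.exp_pos _
    rw [Real.norm_eq_abs, abs_le]
    constructor <;> nlinarith
  rw [← integral_sub (hint W) (hint V), ← Real.norm_eq_abs]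
  have key : ∀ᵐ x ∂σE,
      ‖(1 - Real.exp (-(1/2) * ‖mv (A - W) x‖^2))
        - (1 - Real.exp (-(1/2) * ‖mv (A - V) x‖^2))‖ ≤ ε := by
    filter_upwards [hsupp] with x hx
    have h1 : |‖mv (A - W) x‖ - ‖mv (A - V) x‖| ≤ ‖mv (W - V) x‖ := by
      have hdiff : mv (A - W) x - mv (A - V) x = mv (V - W) x := by
        unfold mv
        rw [← ContinuousLinearMap.sub_apply, ← map_sub]
        congr 1
        abel
      calc |‖mv (A - W) x‖ - ‖mv (A - V) x‖| ≤ ‖mv (A - W) x - mv (A - V) x‖ :=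
            abs_norm_sub_norm_le _ _
        _ = ‖mv (V - W) x‖ := by rw [hdiff]
        _ = ‖mv (W - V) x‖ := by
            unfold mv
            rw [show (V-W : Matrix (Fin (2*M)) (Fin (2*M)) ℝ) = -(W-V) from (neg_sub W V).symm, map_neg,
              ContinuousLinearMap.neg_apply, norm_neg]
    have h2 : ‖mv (W - V) x‖ ≤ (ε / Real.sqrt E) * Real.sqrt (2*E) := by
      calc ‖mv (W - V) x‖ ≤ opN (W - V) * ‖x‖ :=
            (Matrix.toEuclideanCLM (𝕜 := ℝ) (W - V)).le_opNorm x
        _ ≤ (ε / Real.sqrt E) * Real.sqrt (2*E) := by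
            rw [hx]
            apply mul_le_mul_of_nonneg_right hWV (Real.sqrt_nonneg _)
    have h3 : (ε / Real.sqrt E) * Real.sqrt (2*E) = Real.sqrt 2 * ε := by
      rw [Real.sqrt_mul (by norm_num : (0:ℝ) ≤ 2)]
      field_simp
    have h4 := aux_lip ‖mv (A - W) x‖ ‖mv (A - V) x‖
    have h5 : Real.exp (-(1/2)) * Real.sqrt 2 ≤ 1 := by
      have he : Real.exp ((1:ℝ)/2) ^ 2 = Real.exp 1 := by
        rw [← Real.exp_nat_mul]
        norm_num
      have h2e : (2 : ℝ) ≤ Real.exp 1 := by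
        nlinarith [Real.add_one_le_exp (1 : ℝ)]
      have hs2 : Real.sqrt 2 ≤ Real.exp ((1:ℝ)/2) := by
        have : Real.sqrt (Real.exp 1) = Real.exp ((1:ℝ)/2) := by
          rw [← he]
          exact Real.sqrt_sq (Real.exp_pos _).le
        rw [← this]
        exact Real.sqrt_le_sqrt h2e
      have hemul : Real.exp (-(1/2)) * Real.exp ((1:ℝ)/2) = 1 := by
        rw [← Real.exp_add]; norm_num
      nlinarith [Real.exp_pos (-(1/2) : ℝ), Real.sqrt_nonneg (2:ℝ)]
    have h6 : |Real.exp (-(1/2) * ‖mv (A - W) x‖^2)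
        - Real.exp (-(1/2) * ‖mv (A - V) x‖^2)| ≤ Real.exp (-(1/2)) * (Real.sqrt 2 * ε) :=
      h4.trans (mul_le_mul_of_nonneg_left (h1.trans (h2.trans_eq h3))
        (Real.exp_pos _).le)
    rw [Real.norm_eq_abs, show (1 - Real.exp (-(1/2) * ‖mv (A - W) x‖^2))
        - (1 - Real.exp (-(1/2) * ‖mv (A - V) x‖^2))
        = -(Real.exp (-(1/2) * ‖mv (A - W) x‖^2)
          - Real.exp (-(1/2) * ‖mv (A - V) x‖^2)) by ring, abs_neg]
    calc |Real.exp (-(1/2) * ‖mv (A - W) x‖^2)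
          - Real.exp (-(1/2) * ‖mv (A - V) x‖^2)|
        ≤ Real.exp (-(1/2)) * (Real.sqrt 2 * ε) := h6
      _ = (Real.exp (-(1/2)) * Real.sqrt 2) * ε := by ring
      _ ≤ 1 * ε := mul_le_mul_of_nonneg_right h5 hε
      _ = ε := one_mul ε
  calc ‖∫ x, ((1 - Real.exp (-(1/2) * ‖mv (A - W) x‖^2))
        - (1 - Real.exp (-(1/2) * ‖mv (A - V) x‖^2))) ∂σE‖
      ≤ ε * (σE Set.univ).toReal := norm_integral_le_of_norm_le_const key
    _ = ε := by simp
end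
end

section
/- Let M, T ≥ 1 be integers, E > 0, ε ≥ 0, and let A, W, V ∈ K(2M). If ‖W − V‖ ≤ ε·√((2MT−1)/(E(2M+1))), then |C₂(W) − C₂(V)| ≤ ε. -/
open MeasureTheory Matrix

noncomputable section

lemma continuous_coord {n : ℕ} (k : Fin n) :
    Continuous fun x : EuclideanSpace ℝ (Fin n) => x k :=
  (continuous_apply k).comp (PiLp.continuous_ofLp 2 _)

/-- Invariance of second coordinate moments under a rotation-invariant measure. -/
lemma coord_sq_integral_eq {n : ℕ} (τ : Measure (EuclideanSpace ℝ (Fin n)))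
    [IsProbabilityMeasure τ]
    (hrot : ∀ e : EuclideanSpace ℝ (Fin n) ≃ₗᵢ[ℝ] EuclideanSpace ℝ (Fin n),
      Measure.map e τ = τ) (i j : Fin n) :
    ∫ x, (x i)^2 ∂τ = ∫ x, (x j)^2 ∂τ := by
  classical
  set e : EuclideanSpace ℝ (Fin n) ≃ₗᵢ[ℝ] EuclideanSpace ℝ (Fin n) :=
    LinearIsometryEquiv.piLpCongrLeft 2 ℝ ℝ (Equiv.swap i j) with he
  have happ : ∀ (x : EuclideanSpace ℝ (Fin n)) (k : Fin n), e x k = x (Equiv.swap i j k) := by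
    intro x k
    simp [he, LinearIsometryEquiv.piLpCongrLeft_apply, Equiv.piCongrLeft'_apply]
  have hmap := hrot e
  have hmeas : AEMeasurable e τ := (e.continuous.measurable).aemeasurable
  have hsm : AEStronglyMeasurable (fun x : EuclideanSpace ℝ (Fin n) => (x j)^2)
      (Measure.map e τ) := (((continuous_coord j).pow 2)).aestronglyMeasurable
  calc ∫ x, (x i)^2 ∂τ = ∫ x, (e x j)^2 ∂τ := by
        refine integral_congr_ae (Filter.Eventually.of_forall fun x => ?_)
        show (x i)^2 = (e x j)^2
        rw [happ x j, Equiv.swap_apply_right]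
      _ = ∫ x, (x j)^2 ∂(Measure.map e τ) := (integral_map hmeas hsm).symm
      _ = ∫ x, (x j)^2 ∂τ := by rw [hmap]

lemma norm_sq_euclid {n : ℕ} (x : EuclideanSpace ℝ (Fin n)) : ‖x‖^2 = ∑ i, (x i)^2 := by
  rw [EuclideanSpace.norm_eq, Real.sq_sqrt (by positivity)]
  simp [sq_abs]

lemma coord_sq_le {n : ℕ} (x : EuclideanSpace ℝ (Fin n)) (k : Fin n) : (x k)^2 ≤ ‖x‖^2 := by
  rw [norm_sq_euclid]
  exact Finset.single_le_sum (fun i _ => sq_nonneg (x i)) (Finset.mem_univ k)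

/-- Jensen / Cauchy–Schwarz for a probability measure. -/
lemma integral_le_sqrt_integral_sq {α : Type*} [MeasurableSpace α] (τ : Measure α)
    [IsProbabilityMeasure τ] (f : α → ℝ) (hf : ∀ x, 0 ≤ f x)
    (hf1 : Integrable f τ) (hf2 : Integrable (fun x => (f x)^2) τ) :
    ∫ x, f x ∂τ ≤ Real.sqrt (∫ x, (f x)^2 ∂τ) := by
  set m := ∫ x, f x ∂τ with hm
  have hm0 : 0 ≤ m := integral_nonneg hf
  have expand : ∫ x, (f x - m)^2 ∂τ = (∫ x, (f x)^2 ∂τ) - m^2 := by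
    have : ∀ x, (f x - m)^2 = (f x)^2 - (2*m) * f x + m^2 := fun x => by ring
    simp_rw [this]
    have hint1 : Integrable (fun x => (f x)^2 - (2*m) * f x) τ := hf2.sub (hf1.const_mul (2*m))
    rw [integral_add hint1 (integrable_const _),
        integral_sub hf2 (hf1.const_mul (2*m)), MeasureTheory.integral_const_mul, integral_const]
    simp [← hm]
    ring
  have h0 : 0 ≤ ∫ x, (f x - m)^2 ∂τ := integral_nonneg fun x => sq_nonneg _
  have hsq : m^2 ≤ ∫ x, (f x)^2 ∂τ := by linarith
  calc m = Real.sqrt (m^2) := (Real.sqrt_sq hm0).symm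
    _ ≤ Real.sqrt (∫ x, (f x)^2 ∂τ) := Real.sqrt_le_sqrt hsq

lemma continuous_proj (M T : ℕ) (j : Fin T) : Continuous (proj M T j) := by
  unfold proj
  exact (PiLp.continuous_toLp 2 fun _ : Fin (2*M) => ℝ).comp
    (continuous_pi fun i => continuous_coord _)

lemma final_arith (M T : ℕ) (E ε δ : ℝ) (hE : 0 < E) (hε : 0 ≤ ε) (hδ0 : 0 ≤ δ)
    (hM1 : (1:ℝ) ≤ (M:ℝ)) (hT1 : (1:ℝ) ≤ (T:ℝ))
    (hWV : δ ≤ ε * Real.sqrt ((2*(M:ℝ)*T - 1) / (E*(2*(M:ℝ) + 1)))) :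
    Real.exp (-(1/2)) * δ * Real.sqrt (2*E/(T:ℝ)) ≤ ε := by
  set R := (2*(M:ℝ)*T - 1) / (E*(2*(M:ℝ) + 1)) with hR
  have hR0 : 0 ≤ R := by
    apply div_nonneg
    · nlinarith
    · nlinarith
  have hkey : Real.exp (-(1/2)) * Real.sqrt R * Real.sqrt (2*E/(T:ℝ)) ≤ 1 := by
    rw [mul_assoc, ← Real.sqrt_mul hR0]
    have h2 : R * (2*E/(T:ℝ)) ≤ 2 := by
      have hden : (0:ℝ) < E * (2 * (M:ℝ) + 1) * (T:ℝ) :=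
        mul_pos (mul_pos hE (by linarith)) (by linarith)
      rw [hR, div_mul_div_comm, div_le_iff₀ hden]
      nlinarith [mul_pos hE (show (0:ℝ) < (T:ℝ) by linarith)]
    have h3 : Real.sqrt (R * (2*E/(T:ℝ))) ≤ Real.sqrt 2 := Real.sqrt_le_sqrt h2
    have hexp1 : Real.exp (-1) * Real.exp 1 = 1 := by rw [← Real.exp_add]; norm_num
    have he : (2:ℝ) < Real.exp 1 := by
      have := Real.add_one_lt_exp (by norm_num : (1:ℝ) ≠ 0); linarith
    have h5 : Real.exp (-1) * 2 ≤ 1 := by nlinarith [Real.exp_pos (-1:ℝ)]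
    have hsq : (Real.exp (-(1/2)) * Real.sqrt 2)^2 = Real.exp (-1) * 2 := by
      rw [mul_pow, Real.sq_sqrt (by norm_num : (0:ℝ) ≤ 2), pow_two, ← Real.exp_add]
      norm_num
    have h4 : Real.exp (-(1/2)) * Real.sqrt 2 ≤ 1 := by
      nlinarith [mul_nonneg (Real.exp_pos (-(1/2):ℝ)).le (Real.sqrt_nonneg 2)]
    calc Real.exp (-(1/2)) * Real.sqrt (R * (2*E/(T:ℝ)))
        ≤ Real.exp (-(1/2)) * Real.sqrt 2 :=
          mul_le_mul_of_nonneg_left h3 (Real.exp_pos _).le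
      _ ≤ 1 := h4
  calc Real.exp (-(1/2)) * δ * Real.sqrt (2*E/(T:ℝ))
      ≤ Real.exp (-(1/2)) * (ε * Real.sqrt R) * Real.sqrt (2*E/(T:ℝ)) := by
        apply mul_le_mul_of_nonneg_right _ (Real.sqrt_nonneg _)
        exact mul_le_mul_of_nonneg_left hWV (Real.exp_pos _).le
    _ = ε * (Real.exp (-(1/2)) * Real.sqrt R * Real.sqrt (2*E/(T:ℝ))) := by ring
    _ ≤ ε * 1 := mul_le_mul_of_nonneg_left hkey hε
    _ = ε := mul_one ε


set_option maxHeartbeats 1000000 in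
/-- Lipschitz continuity of the ERM2 full risk: if `‖W − V‖ ≤ ε√((2MT−1)/(E(2M+1)))` then
`|C₂(W) − C₂(V)| ≤ ε`, where `C₂(B) = ∫ (1 − exp(−½‖(A−B)P₁x‖²)) dτ_E(x)` and `τ_E`
is the uniform probability measure on the sphere of radius `√(2E)` in `ℝ^{2MT}`. -/
theorem full_risk_erm2_lipschitz (M T : ℕ) (hM : 1 ≤ M) (hT : 1 ≤ T) (E ε : ℝ)
    (hE : 0 < E) (hε : 0 ≤ ε)
    (A W V : Matrix (Fin (2*M)) (Fin (2*M)) ℝ)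
    (hA : A ∈ KK M) (hW : W ∈ KK M) (hV : V ∈ KK M)
    (τE : Measure (EuclideanSpace ℝ (Fin (2*M*T)))) [IsProbabilityMeasure τE]
    (hsupp : ∀ᵐ x ∂τE, ‖x‖ = Real.sqrt (2*E))
    (hrot : ∀ e : EuclideanSpace ℝ (Fin (2*M*T)) ≃ₗᵢ[ℝ] EuclideanSpace ℝ (Fin (2*M*T)),
      Measure.map e τE = τE)
    (hWV : opN (W - V) ≤ ε * Real.sqrt ((2*(M:ℝ)*T - 1) / (E*(2*M + 1)))) :
    |(∫ x, (1 - Real.exp (-(1/2) * ‖mv (A - W) (proj M T ⟨0, hT⟩ x)‖^2)) ∂τE)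
      - (∫ x, (1 - Real.exp (-(1/2) * ‖mv (A - V) (proj M T ⟨0, hT⟩ x)‖^2)) ∂τE)| ≤ ε := by
  classical
  have hE0 : (0:ℝ) ≤ 2*E := by linarith
  have hM1 : (1:ℝ) ≤ (M:ℝ) := by exact_mod_cast hM
  have hT1 : (1:ℝ) ≤ (T:ℝ) := by exact_mod_cast hT
  have hMT : 0 < 2*M*T := by positivity
  set j0 : Fin T := ⟨0, hT⟩ with hj0
  set p := proj M T j0 with hp
  have hpcont : Continuous p := continuous_proj M T j0
  set ι : Fin (2*M) → Fin (2*M*T) := fun i => ⟨2*M*(j0 : ℕ) + (i : ℕ), by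
      have hj : (j0 : ℕ) + 1 ≤ T := j0.isLt
      have hi : (i : ℕ) < 2*M := i.isLt
      calc 2*M*(j0 : ℕ) + (i : ℕ) < 2*M*((j0 : ℕ)+1) := by nlinarith
        _ ≤ 2*M*T := Nat.mul_le_mul_left _ hj⟩ with hι
  have hpc : ∀ (x : EuclideanSpace ℝ (Fin (2*M*T))) (i : Fin (2*M)), p x i = x (ι i) :=
    fun x i => rfl
  -- coordinate second moments
  have hcont_sq : ∀ k : Fin (2*M*T),
      Continuous (fun x : EuclideanSpace ℝ (Fin (2*M*T)) => (x k)^2) :=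
    fun k => (continuous_coord k).pow 2
  have hint_sq : ∀ k : Fin (2*M*T), Integrable (fun x => (x k)^2) τE := by
    intro k
    refine (integrable_const (2*E)).mono' (hcont_sq k).aestronglyMeasurable ?_
    filter_upwards [hsupp] with x hx
    have h1 : (x k)^2 ≤ ‖x‖^2 := coord_sq_le x k
    have h2 : ‖x‖^2 = 2*E := by rw [hx, Real.sq_sqrt hE0]
    rw [Real.norm_eq_abs, abs_of_nonneg (sq_nonneg _)]
    linarith
  have hsum : ∑ k : Fin (2*M*T), ∫ x, (x k)^2 ∂τE = 2*E := by
    rw [← integral_finset_sum _ (fun k _ => hint_sq k)]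
    have heq : ∫ x, ∑ k, (x k)^2 ∂τE = ∫ (x : EuclideanSpace ℝ (Fin (2*M*T))), (2*E) ∂τE := by
      refine integral_congr_ae ?_
      filter_upwards [hsupp] with x hx
      rw [← norm_sq_euclid, hx, Real.sq_sqrt hE0]
    rw [heq]; simp
  have hcoord : ∀ k : Fin (2*M*T), ∫ x, (x k)^2 ∂τE = 2*E/((2*M*T : ℕ) : ℝ) := by
    intro k
    have hsum2 : ∑ k' : Fin (2*M*T), ∫ x, (x k')^2 ∂τE
        = ((2*M*T : ℕ) : ℝ) * ∫ x, (x k)^2 ∂τE := by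
      rw [Finset.sum_congr rfl (fun k' _ => coord_sq_integral_eq τE hrot k' k)]
      simp [Finset.sum_const, mul_comm]
    have hne : ((2*M*T : ℕ) : ℝ) ≠ 0 := Nat.cast_ne_zero.mpr hMT.ne'
    rw [eq_div_iff hne]
    rw [hsum2] at hsum
    linarith [hsum]
  -- moments of ‖p x‖
  have hpsq : ∀ x : EuclideanSpace ℝ (Fin (2*M*T)),
      ‖p x‖^2 = ∑ i : Fin (2*M), (x (ι i))^2 := by
    intro x
    rw [norm_sq_euclid]
    exact Finset.sum_congr rfl fun i _ => by rw [hpc x i]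
  have hint_p2 : Integrable (fun x => ‖p x‖^2) τE := by
    have heq : (fun x : EuclideanSpace ℝ (Fin (2*M*T)) => ‖p x‖^2)
        = fun x => ∑ i : Fin (2*M), (x (ι i))^2 := funext hpsq
    rw [heq]
    exact integrable_finset_sum _ (fun i _ => hint_sq (ι i))
  have hmom2 : ∫ x, ‖p x‖^2 ∂τE = 2*E/(T:ℝ) := by
    have heq : (fun x : EuclideanSpace ℝ (Fin (2*M*T)) => ‖p x‖^2)
        = fun x => ∑ i : Fin (2*M), (x (ι i))^2 := funext hpsq
    rw [heq, integral_finset_sum _ (fun i _ => hint_sq (ι i))]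
    rw [Finset.sum_congr rfl (fun i _ => hcoord (ι i))]
    rw [Finset.sum_const, Finset.card_univ, Fintype.card_fin, nsmul_eq_mul]
    have hM0 : (M:ℝ) ≠ 0 := by linarith
    have hT0 : (T:ℝ) ≠ 0 := by linarith
    push_cast
    field_simp
  have hint_p1 : Integrable (fun x => ‖p x‖) τE := by
    refine (integrable_const (Real.sqrt (2*(M:ℝ)*(2*E)))).mono'
      hpcont.norm.aestronglyMeasurable ?_
    filter_upwards [hsupp] with x hx
    rw [Real.norm_eq_abs, abs_of_nonneg (norm_nonneg _)]
    have h1 : ‖p x‖^2 ≤ 2*(M:ℝ)*(2*E) := by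
      rw [hpsq x]
      calc ∑ i : Fin (2*M), (x (ι i))^2 ≤ ∑ _i : Fin (2*M), ‖x‖^2 :=
            Finset.sum_le_sum (fun i _ => coord_sq_le x (ι i))
        _ = ((2*M : ℕ) : ℝ) * ‖x‖^2 := by
            rw [Finset.sum_const, Finset.card_univ, Fintype.card_fin, nsmul_eq_mul]
        _ = 2*(M:ℝ)*(2*E) := by rw [hx, Real.sq_sqrt hE0]; push_cast; ring
    calc ‖p x‖ = Real.sqrt (‖p x‖^2) := (Real.sqrt_sq (norm_nonneg _)).symm
      _ ≤ Real.sqrt (2*(M:ℝ)*(2*E)) := Real.sqrt_le_sqrt h1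
  have hI : ∫ x, ‖p x‖ ∂τE ≤ Real.sqrt (2*E/(T:ℝ)) := by
    calc ∫ x, ‖p x‖ ∂τE ≤ Real.sqrt (∫ x, ‖p x‖^2 ∂τE) :=
          integral_le_sqrt_integral_sq τE _ (fun x => norm_nonneg _) hint_p1 hint_p2
      _ = Real.sqrt (2*E/(T:ℝ)) := by rw [hmom2]
  -- the two integrands
  set δ := opN (W - V) with hδ
  have hδ0 : 0 ≤ δ := norm_nonneg _
  set f := fun x : EuclideanSpace ℝ (Fin (2*M*T)) =>
    1 - Real.exp (-(1/2) * ‖mv (A - W) (p x)‖^2) with hf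
  set g := fun x : EuclideanSpace ℝ (Fin (2*M*T)) =>
    1 - Real.exp (-(1/2) * ‖mv (A - V) (p x)‖^2) with hg
  have hcont_mv : ∀ C : Matrix (Fin (2*M)) (Fin (2*M)) ℝ,
      Continuous (fun x : EuclideanSpace ℝ (Fin (2*M*T)) => ‖mv C (p x)‖) := by
    intro C
    exact ((Matrix.toEuclideanCLM (𝕜 := ℝ) C).continuous.comp hpcont).norm
  have hcontf : Continuous f :=
    continuous_const.sub (Real.continuous_exp.comp
      (continuous_const.mul (((hcont_mv (A - W))).pow 2)))
  have hcontg : Continuous g :=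
    continuous_const.sub (Real.continuous_exp.comp
      (continuous_const.mul (((hcont_mv (A - V))).pow 2)))
  have hbd : ∀ (C : Matrix (Fin (2*M)) (Fin (2*M)) ℝ)
      (x : EuclideanSpace ℝ (Fin (2*M*T))),
      ‖1 - Real.exp (-(1/2) * ‖mv C (p x)‖^2)‖ ≤ 1 := by
    intro C x
    rw [Real.norm_eq_abs, abs_le]
    constructor
    · have : Real.exp (-(1/2) * ‖mv C (p x)‖^2) ≤ 1 := by
        rw [Real.exp_le_one_iff]
        nlinarith [sq_nonneg ‖mv C (p x)‖]
      linarith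
    · linarith [Real.exp_pos (-(1/2) * ‖mv C (p x)‖^2)]
  have hintf : Integrable f τE :=
    (integrable_const 1).mono' hcontf.aestronglyMeasurable
      (Filter.Eventually.of_forall fun x => hbd (A - W) x)
  have hintg : Integrable g τE :=
    (integrable_const 1).mono' hcontg.aestronglyMeasurable
      (Filter.Eventually.of_forall fun x => hbd (A - V) x)
  -- pointwise Lipschitz bound
  have hpt : ∀ x, |f x - g x| ≤ Real.exp (-(1/2)) * δ * ‖p x‖ := by
    intro x
    have h1 : f x - g x = Real.exp (-(1/2) * ‖mv (A - V) (p x)‖^2)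
        - Real.exp (-(1/2) * ‖mv (A - W) (p x)‖^2) := by
      simp only [hf, hg]; ring
    have hsub : mv (A - V) (p x) - mv (A - W) (p x) = mv (W - V) (p x) := by
      show (Matrix.toEuclideanCLM (𝕜 := ℝ) (A - V)) (p x)
          - (Matrix.toEuclideanCLM (𝕜 := ℝ) (A - W)) (p x)
          = (Matrix.toEuclideanCLM (𝕜 := ℝ) (W - V)) (p x)
      rw [← ContinuousLinearMap.sub_apply, ← map_sub]
      congr 2
      abel
    have h2 : |‖mv (A - V) (p x)‖ - ‖mv (A - W) (p x)‖| ≤ ‖mv (W - V) (p x)‖ := by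
      rw [← hsub]
      exact abs_norm_sub_norm_le _ _
    have h3 : ‖mv (W - V) (p x)‖ ≤ δ * ‖p x‖ :=
      (Matrix.toEuclideanCLM (𝕜 := ℝ) (W - V)).le_opNorm (p x)
    calc |f x - g x| ≤ Real.exp (-(1/2)) * |‖mv (A - V) (p x)‖ - ‖mv (A - W) (p x)‖| := by
          rw [h1]; exact exp_sq_lip _ _
      _ ≤ Real.exp (-(1/2)) * ‖mv (W - V) (p x)‖ :=
          mul_le_mul_of_nonneg_left h2 (Real.exp_pos _).le
      _ ≤ Real.exp (-(1/2)) * (δ * ‖p x‖) :=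
          mul_le_mul_of_nonneg_left h3 (Real.exp_pos _).le
      _ = Real.exp (-(1/2)) * δ * ‖p x‖ := by ring
  -- main estimate
  have key : |(∫ x, f x ∂τE) - ∫ x, g x ∂τE| ≤ Real.exp (-(1/2)) * δ * Real.sqrt (2*E/(T:ℝ)) := by
    rw [← integral_sub hintf hintg]
    calc |∫ x, (f x - g x) ∂τE| ≤ ∫ x, |f x - g x| ∂τE := by
          simpa [Real.norm_eq_abs] using
            norm_integral_le_integral_norm (μ := τE) (f := fun x => f x - g x)
      _ ≤ ∫ x, Real.exp (-(1/2)) * δ * ‖p x‖ ∂τE := by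
          refine integral_mono (hintf.sub hintg).abs ?_ hpt
          exact (hint_p1.const_mul _)
      _ = Real.exp (-(1/2)) * δ * ∫ x, ‖p x‖ ∂τE := by
          rw [MeasureTheory.integral_const_mul]
      _ ≤ Real.exp (-(1/2)) * δ * Real.sqrt (2*E/(T:ℝ)) := by
          apply mul_le_mul_of_nonneg_left hI
          positivity
  have harith := final_arith M T E ε δ hE hε hδ0 hM1 hT1 hWV
  exact key.trans harith
end
end

section
/- For all real numbers a, b ≥ 0, |exp(−a²/2) − exp(−b²/2)| ≤ √(1 − exp(−(a−b)²/2)). -/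
open Finset Filter Nat

private lemma hasSum_exp_real (t : ℝ) : HasSum (fun n : ℕ => t ^ n / n !) (Real.exp t) := by
  have h := (Real.summable_pow_div_factorial t).hasSum
  have h2 : Real.exp t = ∑' n : ℕ, t ^ n / n ! := by
    rw [Real.exp_eq_exp_ℝ, NormedSpace.exp_eq_tsum_div]
  rwa [← h2] at h

/-- Cauchy–Schwarz for the exponential series. -/
private lemma exp_mul_cs {x y : ℝ} (hx : 0 ≤ x) (hy : 0 ≤ y) :
    (Real.exp (x * y) - 1) ^ 2 ≤ (Real.exp (x ^ 2) - 1) * (Real.exp (y ^ 2) - 1) := by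
  have tail_le : ∀ t : ℝ, 0 ≤ t → ∀ N : ℕ,
      (∑ n ∈ range N, t ^ (n + 1) / (n + 1)!) ≤ Real.exp t - 1 := by
    intro t ht N
    have h1 := Real.sum_le_exp_of_nonneg ht (N + 1)
    rw [Finset.sum_range_succ'] at h1
    simp only [pow_zero, Nat.factorial_zero, Nat.cast_one, div_one] at h1
    linarith
  have key : ∀ N : ℕ, (∑ n ∈ range N, (x * y) ^ (n + 1) / (n + 1)!) ^ 2
      ≤ (Real.exp (x ^ 2) - 1) * (Real.exp (y ^ 2) - 1) := by
    intro N
    have hcs := sum_sq_le_sum_mul_sum_of_sq_eq_mul (range N)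
      (r := fun n => (x * y) ^ (n + 1) / (n + 1)!)
      (f := fun n => (x ^ 2) ^ (n + 1) / (n + 1)!)
      (g := fun n => (y ^ 2) ^ (n + 1) / (n + 1)!)
      (fun i _ => by positivity) (fun i _ => by positivity)
      (fun i _ => by
        rw [div_pow, _root_.div_mul_div_comm]
        congr 1
        · ring
        · rw [sq])
    refine hcs.trans ?_
    have h1 := tail_le (x ^ 2) (by positivity) N
    have h2 := tail_le (y ^ 2) (by positivity) N
    have hs1 : (0:ℝ) ≤ ∑ n ∈ range N, (x ^ 2) ^ (n + 1) / (n + 1)! := by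
      apply Finset.sum_nonneg; intro i _; positivity
    have hs2 : (0:ℝ) ≤ ∑ n ∈ range N, (y ^ 2) ^ (n + 1) / (n + 1)! := by
      apply Finset.sum_nonneg; intro i _; positivity
    have he2 : (0:ℝ) ≤ Real.exp (y ^ 2) - 1 := by
      have := Real.one_le_exp (by positivity : (0:ℝ) ≤ y ^ 2); linarith
    exact mul_le_mul h1 h2 hs2 (by linarith)
  have hsum := hasSum_exp_real (x * y)
  have h2 : HasSum (fun n : ℕ => (x * y) ^ (n + 1) / (n + 1)!)
      (Real.exp (x * y) - 1) := by
    have := (hasSum_nat_add_iff' (f := fun n : ℕ => (x * y) ^ n / n !) 1).mpr hsum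
    simpa using this
  have htend := (h2.tendsto_sum_nat).pow 2
  exact le_of_tendsto htend (Eventually.of_forall key)

set_option maxHeartbeats 1000000 in
/-- Difference of squared coherent-state fidelities is bounded by the trace distance:
for all `a, b ≥ 0`, `|exp(−a²/2) − exp(−b²/2)| ≤ √(1 − exp(−(a−b)²/2))`. -/
theorem abs_exp_sq_diff_le_sqrt_one_sub_exp (a b : ℝ) (ha : 0 ≤ a) (hb : 0 ≤ b) :
    |Real.exp (-(a^2)/2) - Real.exp (-(b^2)/2)| ≤ Real.sqrt (1 - Real.exp (-((a-b)^2)/2)) := by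
  set u := Real.exp (-(a^2)/2) with hu_def
  set v := Real.exp (-(b^2)/2) with hv_def
  set c := Real.exp (a * b / 2) with hc_def
  have hu : 0 < u := Real.exp_pos _
  have hv : 0 < v := Real.exp_pos _
  have hc : 1 ≤ c := Real.one_le_exp (by positivity)
  have hc2 : c ^ 2 = Real.exp (a * b) := by
    rw [sq, hc_def, ← Real.exp_add]
    norm_num
  have hZ : Real.exp (-((a-b)^2)/2) = u * v * c ^ 2 := by
    rw [hu_def, hv_def, hc2, ← Real.exp_add, ← Real.exp_add]
    congr 1
    ring
  have hZ1 : u * v * c ^ 2 ≤ 1 := by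
    rw [← hZ]
    exact Real.exp_le_one_iff.mpr (by nlinarith [sq_nonneg (a - b)])
  -- the Gram condition, from Cauchy–Schwarz for the exponential series
  have hcs := exp_mul_cs (x := a / Real.sqrt 2) (y := b / Real.sqrt 2)
    (by positivity) (by positivity)
  have hs2 : Real.sqrt 2 * Real.sqrt 2 = 2 := Real.mul_self_sqrt (by norm_num)
  have hxy : a / Real.sqrt 2 * (b / Real.sqrt 2) = a * b / 2 := by
    rw [_root_.div_mul_div_comm, hs2]
  have hx2 : (a / Real.sqrt 2) ^ 2 = a ^ 2 / 2 := by
    rw [div_pow, Real.sq_sqrt (by norm_num : (0:ℝ) ≤ 2)]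
  have hy2 : (b / Real.sqrt 2) ^ 2 = b ^ 2 / 2 := by
    rw [div_pow, Real.sq_sqrt (by norm_num : (0:ℝ) ≤ 2)]
  rw [hxy, hx2, hy2] at hcs
  have h1u : u * (Real.exp (a ^ 2 / 2) - 1) = 1 - u := by
    rw [hu_def, mul_sub, ← Real.exp_add, mul_one,
      show -(a^2)/2 + a^2/2 = 0 by ring, Real.exp_zero]
  have h1v : v * (Real.exp (b ^ 2 / 2) - 1) = 1 - v := by
    rw [hv_def, mul_sub, ← Real.exp_add, mul_one,
      show -(b^2)/2 + b^2/2 = 0 by ring, Real.exp_zero]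
  have hgram : u * v * (c - 1) ^ 2 ≤ (1 - u) * (1 - v) := by
    calc u * v * (c - 1) ^ 2
        ≤ u * v * ((Real.exp (a ^ 2 / 2) - 1) * (Real.exp (b ^ 2 / 2) - 1)) := by
          exact mul_le_mul_of_nonneg_left hcs (by positivity)
      _ = (u * (Real.exp (a ^ 2 / 2) - 1)) * (v * (Real.exp (b ^ 2 / 2) - 1)) := by ring
      _ = (1 - u) * (1 - v) := by rw [h1u, h1v]
  -- now finish by algebra
  rw [hZ]
  apply Real.abs_le_sqrt
  have hD : 0 ≤ 1 - u * v * c ^ 2 := by linarith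
  have h2 : u + v ≤ (1 - u * v * c ^ 2) + 2 * (u * v) * c := by nlinarith [hgram]
  have h2sq : (u + v) ^ 2 ≤ ((1 - u * v * c ^ 2) + 2 * (u * v) * c) ^ 2 :=
    pow_le_pow_left₀ (by positivity) h2 2
  have hkey : (1 - u * v * c ^ 2) * ((1 - u * v * c ^ 2) + 4 * (u * v) * c - 4 * (u * v))
      ≤ (1 - u * v * c ^ 2) * 1 := by
    apply mul_le_mul_of_nonneg_left _ hD
    nlinarith [mul_nonneg (mul_nonneg hu.le hv.le) (sq_nonneg (c - 2))]
  nlinarith [h2sq, hkey, mul_pos hu hv]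
end

section
/- Let M ≥ 1, T ≥ 1 be integers and E > 0, and let τ_E be the uniform (rotation-invariant) probability measure on the sphere of radius √(2E) centered at the origin in ℝ^{2MT}. Let P₁ : ℝ^{2MT} → ℝ^{2M} be the projection onto the first 2M coordinates. Then ∫ ‖P₁x‖ dτ_E(x) ≤ √(2E(2M+1)/(2MT−1)). -/
open MeasureTheory Matrix

noncomputable section

/-- Expected norm of the first block of a uniform random vector on the sphere of radius
`√(2E)` in `ℝ^{2MT}`: `∫ ‖P₁x‖ dτ_E(x) ≤ √(2E(2M+1)/(2MT−1))`. -/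
theorem expected_block_norm_bound (M T : ℕ) (hM : 1 ≤ M) (hT : 1 ≤ T) (E : ℝ) (hE : 0 < E)
    (τE : Measure (EuclideanSpace ℝ (Fin (2*M*T)))) [IsProbabilityMeasure τE]
    (hsupp : ∀ᵐ x ∂τE, ‖x‖ = Real.sqrt (2*E))
    (hrot : ∀ e : EuclideanSpace ℝ (Fin (2*M*T)) ≃ₗᵢ[ℝ] EuclideanSpace ℝ (Fin (2*M*T)),
      Measure.map e τE = τE) :
    ∫ x, ‖proj M T ⟨0, hT⟩ x‖ ∂τE ≤ Real.sqrt (2*E*(2*M + 1) / (2*(M:ℝ)*T - 1)) := by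
  classical
  have hMT : 0 < 2*M*T := by positivity
  -- the embedding of the first block's coordinates
  have hglt : ∀ i : Fin (2*M), (i : ℕ) < 2*M*T :=
    fun i => lt_of_lt_of_le i.isLt (Nat.le_mul_of_pos_right _ hT)
  set g : Fin (2*M) → Fin (2*M*T) := fun i => ⟨(i : ℕ), hglt i⟩ with hgdef
  have hginj : Function.Injective g := by
    intro a b h
    exact Fin.ext (by simpa [hgdef] using congrArg Fin.val h)
  have hproj : ∀ (x : EuclideanSpace ℝ (Fin (2*M*T))) (i : Fin (2*M)),
      proj M T ⟨0, hT⟩ x i = x (g i) := by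
    intro x i
    show x _ = x (g i)
    refine congrArg x.ofLp (Fin.ext ?_)
    simp [hgdef]
  have hnsq : ∀ x : EuclideanSpace ℝ (Fin (2*M*T)),
      ‖proj M T ⟨0, hT⟩ x‖^2 = ∑ i, (x (g i))^2 := by
    intro x
    rw [EuclideanSpace.norm_eq, Real.sq_sqrt (by positivity)]
    exact Finset.sum_congr rfl fun i _ => by rw [hproj, Real.norm_eq_abs, sq_abs]
  have hnormx : ∀ x : EuclideanSpace ℝ (Fin (2*M*T)), ‖x‖ = Real.sqrt (∑ j, (x j)^2) := by
    intro x; rw [EuclideanSpace.norm_eq]; simp [sq_abs]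
  -- coordinate continuity
  have hc : ∀ j : Fin (2*M*T), Continuous fun x : EuclideanSpace ℝ (Fin (2*M*T)) => x j :=
    fun j => PiLp.continuous_apply 2 _ j
  -- each squared coordinate is integrable
  have hint : ∀ j : Fin (2*M*T), Integrable (fun x => (x j)^2) τE := by
    intro j
    refine (integrable_const (2*E)).mono' (((hc j).pow 2).aestronglyMeasurable) ?_
    filter_upwards [hsupp] with x hx
    have h1 : (x j)^2 ≤ ∑ k, (x k)^2 :=
      Finset.single_le_sum (fun k _ => sq_nonneg (x k)) (Finset.mem_univ j)
    have h2 : (∑ k, (x k)^2) = 2*E := by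
      have h3 := hnormx x
      rw [hx] at h3
      have hS : (0:ℝ) ≤ ∑ j, (x j)^2 := by positivity
      calc (∑ k, (x k)^2) = Real.sqrt (∑ j, (x j)^2) ^ 2 := (Real.sq_sqrt hS).symm
        _ = Real.sqrt (2*E) ^ 2 := by rw [← h3]
        _ = 2*E := Real.sq_sqrt (by positivity)
    rw [Real.norm_eq_abs, abs_of_nonneg (sq_nonneg _)]
    linarith
  -- swap invariance: all coordinates have the same second moment
  have hswap : ∀ j k : Fin (2*M*T), ∫ x, (x j)^2 ∂τE = ∫ x, (x k)^2 ∂τE := by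
    intro j k
    set e := LinearIsometryEquiv.piLpCongrLeft 2 ℝ ℝ (Equiv.swap j k) with hedef
    have hek : ∀ x : EuclideanSpace ℝ (Fin (2*M*T)), e x k = x j := by
      intro x
      rw [hedef, LinearIsometryEquiv.piLpCongrLeft_apply, Equiv.piCongrLeft'_apply,
        Equiv.symm_swap, Equiv.swap_apply_right]
    calc ∫ x, (x j)^2 ∂τE = ∫ x, ((e x) k)^2 ∂τE := by simp [hek]
      _ = ∫ x, (x k)^2 ∂(Measure.map e τE) :=
          (integral_map e.continuous.aemeasurable
            (((hc k).pow 2).aestronglyMeasurable.mono_ac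
              Measure.AbsolutelyContinuous.rfl)).symm
      _ = ∫ x, (x k)^2 ∂τE := by rw [hrot e]
    done
  set c : ℝ := ∫ x, (x (⟨0, hMT⟩ : Fin (2*M*T)))^2 ∂τE with hcdef
  -- total second moment is 2E
  have hsum : (2*M*T : ℝ) * c = 2*E := by
    have h1 : ∑ j : Fin (2*M*T), ∫ x, (x j)^2 ∂τE = (2*M*T : ℝ) * c := by
      rw [Finset.sum_congr rfl fun j _ => hswap j ⟨0, hMT⟩]
      simp [Finset.sum_const, nsmul_eq_mul, hcdef]
    rw [← h1, ← integral_finset_sum _ (fun j _ => hint j)]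
    have h2 : ∀ᵐ x ∂τE, (∑ j, (x j)^2) = 2*E := by
      filter_upwards [hsupp] with x hx
      have h3 := hnormx x
      rw [hx] at h3
      have hS : (0:ℝ) ≤ ∑ j, (x j)^2 := by positivity
      calc (∑ j, (x j)^2) = Real.sqrt (∑ j, (x j)^2) ^ 2 := (Real.sq_sqrt hS).symm
        _ = Real.sqrt (2*E) ^ 2 := by rw [← h3]
        _ = 2*E := Real.sq_sqrt (by positivity)
    rw [integral_congr_ae h2]
    simp
  have hc2E : c = 2*E / (2*M*T : ℝ) := by
    have hn : (2*M*T : ℝ) ≠ 0 := by positivity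
    field_simp
    linarith [hsum]
  -- second moment of the block norm
  set f : EuclideanSpace ℝ (Fin (2*M*T)) → ℝ := fun x => ‖proj M T ⟨0, hT⟩ x‖ with hfdef
  have hI2 : ∫ x, (f x)^2 ∂τE = (2*M : ℝ) * c := by
    have : ∀ x, (f x)^2 = ∑ i : Fin (2*M), (x (g i))^2 := fun x => hnsq x
    simp only [this]
    rw [integral_finset_sum _ (fun i _ => hint (g i))]
    rw [Finset.sum_congr rfl fun i _ => hswap (g i) ⟨0, hMT⟩]
    simp [Finset.sum_const, nsmul_eq_mul, hcdef]
  -- f is continuous and bounded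
  have hfeq : f = fun x => Real.sqrt (∑ i : Fin (2*M), (x (g i))^2) := by
    funext x
    show ‖proj M T ⟨0, hT⟩ x‖ = _
    rw [← Real.sqrt_sq (norm_nonneg (proj M T ⟨0, hT⟩ x)), hnsq x]
  have hfc : Continuous f := by
    rw [hfeq]
    exact Real.continuous_sqrt.comp (continuous_finset_sum _ fun i _ => (hc (g i)).pow 2)
  have hfle : ∀ x, f x ≤ ‖x‖ := by
    intro x
    rw [hfeq, hnormx x]
    apply Real.sqrt_le_sqrt
    calc ∑ i : Fin (2*M), (x (g i))^2
        = ∑ j ∈ Finset.univ.image g, (x j)^2 :=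
          (Finset.sum_image (f := fun j => (x j)^2) (fun a _ b _ h => hginj h)).symm
      _ ≤ ∑ j, (x j)^2 :=
          Finset.sum_le_sum_of_subset_of_nonneg (Finset.subset_univ _)
            (fun j _ _ => sq_nonneg _)
  have hmem : MemLp f 2 τE := by
    refine MemLp.of_bound hfc.aestronglyMeasurable (Real.sqrt (2*E)) ?_
    filter_upwards [hsupp] with x hx
    rw [Real.norm_eq_abs, abs_of_nonneg (norm_nonneg _)]
    exact hx ▸ hfle x
  -- Jensen via variance
  have hvar := ProbabilityTheory.variance_nonneg f τE
  rw [ProbabilityTheory.variance_eq_sub hmem] at hvar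
  have hjensen : (∫ x, f x ∂τE)^2 ≤ ∫ x, (f x)^2 ∂τE := by
    have : (∫ x, (f^2) x ∂τE) = ∫ x, (f x)^2 ∂τE := by simp [Pi.pow_apply]
    rw [this] at hvar
    linarith
  have hm0 : 0 ≤ ∫ x, f x ∂τE := integral_nonneg fun x => norm_nonneg _
  have hkey : ∫ x, f x ∂τE ≤ Real.sqrt ((2*M : ℝ) * c) := by
    rw [← Real.sqrt_sq hm0]
    apply Real.sqrt_le_sqrt
    rw [← hI2]
    exact hjensen
  refine hkey.trans (Real.sqrt_le_sqrt ?_)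
  -- final arithmetic
  rw [hc2E]
  have hm1 : (1:ℝ) ≤ M := by exact_mod_cast hM
  have ht1 : (1:ℝ) ≤ T := by exact_mod_cast hT
  have ht0 : (0:ℝ) < T := by linarith
  have hd2 : (0:ℝ) < 2*(M:ℝ)*T - 1 := by nlinarith
  have heq : 2*(M:ℝ)*(2*E/(2*(M:ℝ)*T)) = 2*E/(T:ℝ) := by
    field_simp
  rw [heq, div_le_div_iff₀ ht0 hd2]
  nlinarith
end
end

section
/- Let M, T ≥ 1 be integers, E > 0, and let A, B ∈ O(2M) be orthogonal 2M×2M real matrices. Define F : ℝ^{2MT} → ℝ by F(x) = (1/T) Σ_{j=1}^T (1 − exp(−½‖(A−B)P_j x‖²)), where P_j : ℝ^{2MT} → ℝ^{2M} is the projection onto coordinates 2M(j−1)+1,…,2Mj. Then for every x with ‖x‖ ≤ √(2E), ‖∇F(x)‖ ≤ (√(2E)/T)·‖(A−B)ᵀ(A−B)‖ ≤ 4√(2E)/T. -/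
open MeasureTheory Matrix

noncomputable section

/-! ### Auxiliary material -/

def idxE (M T : ℕ) : Fin T × Fin (2*M) ≃ Fin (2*M*T) :=
  finProdFinEquiv.trans (finCongr (by ring))

lemma idxE_val {M T : ℕ} (j : Fin T) (i : Fin (2*M)) :
    ((idxE M T (j, i)) : ℕ) = 2*M*(j:ℕ) + (i:ℕ) := by
  simp [idxE, finProdFinEquiv]; ring

lemma proj_apply {M T : ℕ} (j : Fin T) (x : EuclideanSpace ℝ (Fin (2*M*T)))
    (i : Fin (2*M)) : proj M T j x i = x (idxE M T (j, i)) := by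
  rw [proj, WithLp.equiv_symm_apply, PiLp.toLp_apply]
  exact congrArg x.ofLp (Fin.ext (idxE_val j i).symm)

def projCLM (M T : ℕ) (j : Fin T) :
    EuclideanSpace ℝ (Fin (2*M*T)) →L[ℝ] EuclideanSpace ℝ (Fin (2*M)) :=
  LinearMap.toContinuousLinearMap
  { toFun := proj M T j
    map_add' := by intro u v; ext i; simp [proj_apply]
    map_smul' := by intro c u; ext i; simp [proj_apply] }

lemma projCLM_apply {M T : ℕ} (j : Fin T) (x : EuclideanSpace ℝ (Fin (2*M*T))) :
    projCLM M T j x = proj M T j x := rfl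

lemma sum_decomp {M T : ℕ} (f : Fin (2*M*T) → ℝ) :
    ∑ i, f i = ∑ j : Fin T, ∑ i : Fin (2*M), f (idxE M T (j, i)) := by
  rw [← Equiv.sum_comp (idxE M T) f, Fintype.sum_prod_type]

lemma star_toE {n : ℕ} (C : Matrix (Fin n) (Fin n) ℝ) :
    Matrix.toEuclideanCLM (𝕜 := ℝ) Cᵀ =
      ContinuousLinearMap.adjoint (Matrix.toEuclideanCLM (𝕜 := ℝ) C) := by
  rw [← ContinuousLinearMap.star_eq_adjoint, ← map_star,
    Matrix.star_eq_conjTranspose, Matrix.conjTranspose_eq_transpose_of_trivial]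

lemma inner_TQ {n : ℕ} (C : Matrix (Fin n) (Fin n) ℝ) (v w : EuclideanSpace ℝ (Fin n)) :
    (inner ℝ ((Matrix.toEuclideanCLM (𝕜 := ℝ) (Cᵀ * C)) v) w : ℝ) =
      inner ℝ (Matrix.toEuclideanCLM (𝕜 := ℝ) C v) (Matrix.toEuclideanCLM (𝕜 := ℝ) C w) := by
  rw [_root_.map_mul, ContinuousLinearMap.mul_apply, star_toE,
    ContinuousLinearMap.adjoint_inner_left]

lemma norm_orth {n : ℕ} (A : Matrix (Fin n) (Fin n) ℝ) (hA : Aᵀ * A = 1) :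
    ‖Matrix.toEuclideanCLM (𝕜 := ℝ) A‖ ≤ 1 := by
  refine ContinuousLinearMap.opNorm_le_bound _ zero_le_one (fun v => ?_)
  rw [one_mul]
  have h : (inner ℝ (Matrix.toEuclideanCLM (𝕜 := ℝ) A v)
      (Matrix.toEuclideanCLM (𝕜 := ℝ) A v) : ℝ) = inner ℝ v v := by
    rw [← inner_TQ A v v, hA, _root_.map_one, ContinuousLinearMap.one_apply]
  have h1 := real_inner_self_eq_norm_sq (Matrix.toEuclideanCLM (𝕜 := ℝ) A v)
  have h2 := real_inner_self_eq_norm_sq v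
  nlinarith [norm_nonneg (Matrix.toEuclideanCLM (𝕜 := ℝ) A v), norm_nonneg v]

set_option maxHeartbeats 1000000 in
/-- Gradient bound for the ERM2 empirical risk viewed as a function of the single
`2MT`-dimensional mean vector: for `‖x‖ ≤ √(2E)`,
`‖∇F(x)‖ ≤ (√(2E)/T)‖(A−B)ᵀ(A−B)‖ ≤ 4√(2E)/T`. -/
theorem erm2_empirical_risk_gradient_bound (M T : ℕ) (hM : 1 ≤ M) (hT : 1 ≤ T)
    (E : ℝ) (hE : 0 < E)
    (A B : Matrix (Fin (2*M)) (Fin (2*M)) ℝ) (hA : Aᵀ * A = 1) (hB : Bᵀ * B = 1)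
    (x : EuclideanSpace ℝ (Fin (2*M*T))) (hx : ‖x‖ ≤ Real.sqrt (2*E)) :
    ‖gradient (fun y : EuclideanSpace ℝ (Fin (2*M*T)) =>
        (1/(T:ℝ)) * ∑ j : Fin T, (1 - Real.exp (-(1/2) * ‖mv (A - B) (proj M T j y)‖^2))) x‖
      ≤ Real.sqrt (2*E) / T * opN ((A - B)ᵀ * (A - B)) ∧
    Real.sqrt (2*E) / T * opN ((A - B)ᵀ * (A - B)) ≤ 4 * Real.sqrt (2*E) / T := by
  classical
  have hTpos : (0:ℝ) < T := by exact_mod_cast hT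
  set C := A - B with hCdef
  set TC := Matrix.toEuclideanCLM (𝕜 := ℝ) C with hTCdef
  set TQ := Matrix.toEuclideanCLM (𝕜 := ℝ) (Cᵀ * C) with hTQdef
  set K : Fin T → (EuclideanSpace ℝ (Fin (2*M*T)) →L[ℝ] EuclideanSpace ℝ (Fin (2*M))) :=
    fun j => TC.comp (projCLM M T j) with hKdef
  -- rewrite the norm-squared as an inner product
  have hFeq : (fun y : EuclideanSpace ℝ (Fin (2*M*T)) =>
        (1/(T:ℝ)) * ∑ j : Fin T, (1 - Real.exp (-(1/2) * ‖mv C (proj M T j y)‖^2)))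
      = fun y => (1/(T:ℝ)) * ∑ j : Fin T,
          (1 - Real.exp (-(1/2) * (inner ℝ (K j y) (K j y) : ℝ))) := by
    funext y
    congr 1
    refine Finset.sum_congr rfl (fun j _ => ?_)
    have : mv C (proj M T j y) = K j y := rfl
    rw [this, real_inner_self_eq_norm_sq]
  rw [hFeq]
  set c : Fin T → ℝ := fun j => Real.exp (-(1/2) * (inner ℝ (K j x) (K j x) : ℝ)) with hcdef
  set u : Fin T → EuclideanSpace ℝ (Fin (2*M)) := fun j => TQ (proj M T j x) with hudef
  set G : EuclideanSpace ℝ (Fin (2*M*T)) := (WithLp.equiv 2 (Fin (2*M*T) → ℝ)).symm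
    (fun i => (1/(T:ℝ)) * c ((idxE M T).symm i).1 *
      u ((idxE M T).symm i).1 ((idxE M T).symm i).2) with hGdef
  have hGapp : ∀ (j : Fin T) (i : Fin (2*M)),
      G (idxE M T (j, i)) = (1/(T:ℝ)) * c j * u j i := by
    intro j i
    rw [hGdef, WithLp.equiv_symm_apply, PiLp.toLp_apply, Equiv.symm_apply_apply]
  set Dj : Fin T → (EuclideanSpace ℝ (Fin (2*M*T)) →L[ℝ] ℝ) := fun j =>
    (fderivInnerCLM ℝ (K j x, K j x)).comp ((K j).prod (K j)) with hDjdef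
  set Φ : EuclideanSpace ℝ (Fin (2*M*T)) →L[ℝ] ℝ :=
    (1/(T:ℝ)) • ∑ j : Fin T, -(c j • ((-(1/2):ℝ) • Dj j)) with hPhidef
  have hF : HasFDerivAt (fun y => (1/(T:ℝ)) * ∑ j : Fin T,
      (1 - Real.exp (-(1/2) * (inner ℝ (K j y) (K j y) : ℝ)))) Φ x := by
    have hder : ∀ j : Fin T, HasFDerivAt
        (fun y => 1 - Real.exp (-(1/2) * (inner ℝ (K j y) (K j y) : ℝ)))
        (-(c j • ((-(1/2):ℝ) • Dj j))) x := by
      intro j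
      have h1 : HasFDerivAt (fun y => (inner ℝ (K j y) (K j y) : ℝ)) (Dj j) x :=
        ((K j).hasFDerivAt).inner ℝ ((K j).hasFDerivAt)
      have h2 := h1.const_mul (-(1/2 : ℝ))
      have h3 := h2.exp
      exact h3.const_sub 1
    exact (HasFDerivAt.fun_sum (fun j _ => hder j)).const_mul (1/(T:ℝ))
  have hGrad := hasFDerivAt_iff_hasGradientAt.mp hF
  rw [hGrad.gradient]
  -- identify the gradient with G
  have hPhiG : Φ = InnerProductSpace.toDual ℝ _ G := by
    ext h
    rw [InnerProductSpace.toDual_apply_apply]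
    have hRHS : (inner ℝ G h : ℝ) = ∑ j : Fin T, (1/(T:ℝ)) * (c j * (inner ℝ (K j x) (K j h) : ℝ)) := by
      rw [PiLp.inner_apply]
      simp only [RCLike.inner_apply, conj_trivial]
      rw [sum_decomp (fun i => h i * G i)]
      refine Finset.sum_congr rfl (fun j _ => ?_)
      have hinner : (inner ℝ (K j x) (K j h) : ℝ) = ∑ i, u j i * proj M T j h i := by
        have hiq := inner_TQ C (proj M T j x) (proj M T j h)
        have : (inner ℝ (K j x) (K j h) : ℝ)
            = inner ℝ (Matrix.toEuclideanCLM (𝕜 := ℝ) C (proj M T j x))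
                (Matrix.toEuclideanCLM (𝕜 := ℝ) C (proj M T j h)) := rfl
        rw [this, ← hiq, PiLp.inner_apply]
        simp only [RCLike.inner_apply, conj_trivial]
        exact Finset.sum_congr rfl (fun i _ => mul_comm _ _)
      rw [hinner, Finset.mul_sum, Finset.mul_sum]
      refine Finset.sum_congr rfl (fun i _ => ?_)
      rw [hGapp, proj_apply]
      ring
    rw [hRHS, hPhidef]
    simp only [ContinuousLinearMap.smul_apply, ContinuousLinearMap.sum_apply,
      ContinuousLinearMap.neg_apply, ContinuousLinearMap.coe_smul', Pi.smul_apply,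
      ContinuousLinearMap.coe_comp', Function.comp_apply, fderivInnerCLM_apply,
      ContinuousLinearMap.prod_apply, smul_eq_mul, hDjdef]
    rw [Finset.mul_sum]
    refine Finset.sum_congr rfl (fun j _ => ?_)
    rw [real_inner_comm (K j h) (K j x)]
    ring
  have hGradG : (InnerProductSpace.toDual ℝ _).symm Φ = G := by
    rw [hPhiG, LinearIsometryEquiv.symm_apply_apply]
  rw [hGradG]
  -- norm bound on G
  have hc1 : ∀ j, 0 < c j ∧ c j ≤ 1 := by
    intro j
    refine ⟨Real.exp_pos _, ?_⟩
    rw [hcdef]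
    apply Real.exp_le_one_iff.mpr
    have := real_inner_self_nonneg (x := K j x)
    nlinarith
  have hnormsq : ∀ (n : ℕ) (v : EuclideanSpace ℝ (Fin n)), ‖v‖^2 = ∑ i, (v i)^2 := by
    intro n v
    rw [EuclideanSpace.norm_eq, Real.sq_sqrt (by positivity)]
    refine Finset.sum_congr rfl (fun i _ => ?_)
    rw [Real.norm_eq_abs, sq_abs]
  have hprojx : ∑ j : Fin T, ‖proj M T j x‖^2 = ‖x‖^2 := by
    rw [hnormsq _ x, sum_decomp (fun i => x i ^ 2)]
    refine Finset.sum_congr rfl (fun j _ => ?_)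
    rw [hnormsq _ (proj M T j x)]
    exact Finset.sum_congr rfl (fun i _ => by rw [proj_apply])
  have hopNeq : opN (Cᵀ * C) = ‖TQ‖ := by rw [opN, hTQdef]
  have hop : ∀ j, ‖u j‖ ≤ ‖TQ‖ * ‖proj M T j x‖ := fun j => TQ.le_opNorm (proj M T j x)
  have hGsq : ‖G‖^2 ≤ (Real.sqrt (2*E) / T * ‖TQ‖)^2 := by
    rw [hnormsq _ G, sum_decomp (fun i => G i ^ 2)]
    have hbound : ∀ j : Fin T, ∑ i : Fin (2*M), G (idxE M T (j, i)) ^ 2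
        ≤ (1/(T:ℝ))^2 * (‖TQ‖^2 * ‖proj M T j x‖^2) := by
      intro j
      have h1 : ∑ i : Fin (2*M), G (idxE M T (j, i)) ^ 2
          = ((1/(T:ℝ)) * c j)^2 * ‖u j‖^2 := by
        rw [hnormsq _ (u j), Finset.mul_sum]
        refine Finset.sum_congr rfl (fun i _ => ?_)
        rw [hGapp]; ring
      rw [h1]
      have h1T : (0:ℝ) < 1/T := by positivity
      have h2 : ((1/(T:ℝ)) * c j)^2 ≤ (1/(T:ℝ))^2 := by
        have hle : (1/(T:ℝ)) * c j ≤ 1/(T:ℝ) :=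
          mul_le_of_le_one_right h1T.le (hc1 j).2
        have hnn : 0 ≤ (1/(T:ℝ)) * c j := mul_nonneg h1T.le (hc1 j).1.le
        exact pow_le_pow_left₀ hnn hle 2
      have h3 : ‖u j‖^2 ≤ ‖TQ‖^2 * ‖proj M T j x‖^2 := by
        have := pow_le_pow_left₀ (norm_nonneg (u j)) (hop j) 2
        rwa [mul_pow] at this
      exact mul_le_mul h2 h3 (sq_nonneg _) (sq_nonneg _)
    calc ∑ j : Fin T, ∑ i : Fin (2*M), G (idxE M T (j, i)) ^ 2
        ≤ ∑ j : Fin T, (1/(T:ℝ))^2 * (‖TQ‖^2 * ‖proj M T j x‖^2) :=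
          Finset.sum_le_sum (fun j _ => hbound j)
      _ = (1/(T:ℝ))^2 * ‖TQ‖^2 * ‖x‖^2 := by
          rw [← Finset.mul_sum, ← Finset.mul_sum, hprojx]; ring
      _ ≤ (Real.sqrt (2*E) / T * ‖TQ‖)^2 := by
          have hs2 : Real.sqrt (2*E) ^ 2 = 2*E := Real.sq_sqrt (by linarith)
          have hx2 : ‖x‖^2 ≤ 2*E := by
            have := pow_le_pow_left₀ (norm_nonneg x) hx 2
            rwa [hs2] at this
          have hrw : (Real.sqrt (2*E) / T * ‖TQ‖)^2
              = (1/(T:ℝ))^2 * ‖TQ‖^2 * (2*E) := by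
            rw [mul_pow, div_pow, hs2]; ring
          rw [hrw]
          exact mul_le_mul_of_nonneg_left hx2 (by positivity)
  have hGle : ‖G‖ ≤ Real.sqrt (2*E) / T * opN (Cᵀ * C) := by
    rw [hopNeq]
    have hrhs : 0 ≤ Real.sqrt (2*E) / T * ‖TQ‖ :=
      mul_nonneg (by positivity) (norm_nonneg _)
    have := Real.sqrt_le_sqrt hGsq
    rwa [Real.sqrt_sq (norm_nonneg G), Real.sqrt_sq hrhs] at this
  refine ⟨hGle, ?_⟩
  -- second part : opN ≤ 4
  have hopC : opN (Cᵀ * C) ≤ 4 := by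
    have hmul : Matrix.toEuclideanCLM (𝕜 := ℝ) (Cᵀ * C) =
        ContinuousLinearMap.adjoint TC ∘L TC := by
      rw [_root_.map_mul, star_toE]; rfl
    have hnormTC : ‖TC‖ ≤ 2 := by
      have : TC = Matrix.toEuclideanCLM (𝕜 := ℝ) A - Matrix.toEuclideanCLM (𝕜 := ℝ) B := by
        rw [hTCdef, hCdef, map_sub]
      rw [this]
      calc ‖Matrix.toEuclideanCLM (𝕜 := ℝ) A - Matrix.toEuclideanCLM (𝕜 := ℝ) B‖
          ≤ ‖Matrix.toEuclideanCLM (𝕜 := ℝ) A‖ + ‖Matrix.toEuclideanCLM (𝕜 := ℝ) B‖ :=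
            norm_sub_le _ _
        _ ≤ 1 + 1 := add_le_add (norm_orth A hA) (norm_orth B hB)
        _ = 2 := by norm_num
    have : opN (Cᵀ * C) = ‖TC‖ * ‖TC‖ := by
      rw [opN, hmul, ContinuousLinearMap.norm_adjoint_comp_self]
    rw [this]
    nlinarith [norm_nonneg TC]
  have hsnn : (0:ℝ) ≤ Real.sqrt (2*E) / T := by positivity
  calc Real.sqrt (2*E) / T * opN (Cᵀ * C) ≤ Real.sqrt (2*E) / T * 4 :=
        mul_le_mul_of_nonneg_left hopC hsnn
    _ = 4 * Real.sqrt (2*E) / T := by ring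
end
end

section
/- Let A, B ∈ K(2M) and let x^(1),…,x^(T) ∈ ℝ^{2M} be vectors such that the set {x^(j) : 1 ≤ j ≤ T} ∪ {Ω x^(j) : 1 ≤ j ≤ T} spans ℝ^{2M}, where Ω = [[0, I_M], [−I_M, 0]]. If A x^(j) = B x^(j) for all j = 1,…,T, then A = B. In particular, T = M suitably chosen training vectors suffice to determine an element of K(2M) uniquely. -/
open MeasureTheory Matrix

noncomputable section

/-- An element of `K(2M)` is determined by its action on training vectors whose union with
their `Ω`-images spans `ℝ^{2M}`: if `A x⁽ʲ⁾ = B x⁽ʲ⁾` for all `j`, then `A = B`. -/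
theorem K_determined_by_training_vectors (M T : ℕ)
    (A B : Matrix (Fin (2*M)) (Fin (2*M)) ℝ) (hA : A ∈ KK M) (hB : B ∈ KK M)
    (x : Fin T → (Fin (2*M) → ℝ))
    (hspan : Submodule.span ℝ
      (Set.range x ∪ Set.range (fun j => (Omg M).mulVec (x j))) = ⊤)
    (hagree : ∀ j, A.mulVec (x j) = B.mulVec (x j)) :
    A = B := by
  -- Each element commutes with Ω
  have comm : ∀ C : Matrix (Fin (2*M)) (Fin (2*M)) ℝ, C ∈ KK M →
      Omg M * C = C * Omg M := by
    intro C hC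
    obtain ⟨h1, h2⟩ := hC
    have h1' : C * Cᵀ = 1 := mul_eq_one_comm.mp h1
    calc Omg M * C = C * Cᵀ * Omg M * C := by rw [h1', one_mul]
      _ = C * (Cᵀ * Omg M * C) := by simp only [Matrix.mul_assoc]
      _ = C * Omg M := by rw [h2]
  have hAc := comm A hA
  have hBc := comm B hB
  -- A and B agree on Ω x j too
  have hagree2 : ∀ j, A.mulVec ((Omg M).mulVec (x j)) = B.mulVec ((Omg M).mulVec (x j)) := by
    intro j
    rw [Matrix.mulVec_mulVec, Matrix.mulVec_mulVec, ← hAc, ← hBc,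
      ← Matrix.mulVec_mulVec, ← Matrix.mulVec_mulVec, hagree j]
  -- kernel argument
  have hker : Submodule.span ℝ
      (Set.range x ∪ Set.range (fun j => (Omg M).mulVec (x j))) ≤
      LinearMap.ker (A.mulVecLin - B.mulVecLin) := by
    rw [Submodule.span_le]
    rintro v (⟨j, rfl⟩ | ⟨j, rfl⟩) <;>
      simp [LinearMap.mem_ker, Matrix.mulVecLin_apply, hagree j, hagree2 j]
  rw [hspan, top_le_iff] at hker
  have h0 : A.mulVecLin - B.mulVecLin = 0 := LinearMap.ker_eq_top.mp hker
  have : A.mulVecLin = B.mulVecLin := sub_eq_zero.mp h0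
  have h2 : Matrix.toLin' A = Matrix.toLin' B := by
    rw [Matrix.toLin'_apply', Matrix.toLin'_apply']; exact this
  exact Matrix.toLin'.injective h2
end
end
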